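/- arXiv:1304.0070 — 9 statements merged into one kernel-verified Lean document; each statement's English description precedes it below -/
import Mathlib

section
/- For every real number x ≥ 0, the floor of x equals the sum over k ≥ 1 of ⌊x/2^k + 1/2⌋. -/
lemma hermite_two (y : ℝ) : ⌊y⌋ + ⌊y + 1/2⌋ = ⌊2*y⌋ := by
  have hy : y = (⌊y⌋ : ℝ) + Int.fract y := by rw [Int.floor_add_fract]
  have hf0 : 0 ≤ Int.fract y := Int.fract_nonneg y
  have hf1 : Int.fract y < 1 := Int.fract_lt_one y
  set f := Int.fract y with hfdef
  rw [hy]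
  have h1 : ((⌊y⌋ : ℝ) + f) + 1/2 = f + 1/2 + (⌊y⌋ : ℤ) := by push_cast; ring
  have h2 : 2 * ((⌊y⌋ : ℝ) + f) = 2*f + (2*⌊y⌋ : ℤ) := by push_cast; ring
  rw [h1, h2, Int.floor_add_intCast, Int.floor_add_intCast, Int.floor_intCast_add,
    Int.floor_eq_zero_iff.2 ⟨hf0, hf1⟩]
  have key : ⌊f + 1/2⌋ = ⌊2*f⌋ := by
    rcases lt_or_ge f (1/2) with h | h
    · rw [Int.floor_eq_zero_iff.2 ⟨by linarith, by linarith⟩,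
        Int.floor_eq_zero_iff.2 ⟨by linarith, by linarith⟩]
    · have e1 : ⌊f + 1/2⌋ = 1 := by
        rw [Int.floor_eq_iff]; constructor <;> push_cast <;> linarith
      have e2 : ⌊2*f⌋ = 1 := by
        rw [Int.floor_eq_iff]; constructor <;> push_cast <;> linarith
      rw [e1, e2]
  omega

theorem floor_eq_sum_round_halves (x : ℝ) (hx : 0 ≤ x) :
    ⌊x⌋ = ∑ᶠ k : ℕ, ⌊x / 2 ^ (k + 1) + 1 / 2⌋ := by
  obtain ⟨N, hN⟩ := pow_unbounded_of_one_lt x (one_lt_two (α := ℝ))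
  have hterm : ∀ k : ℕ, ⌊x / 2 ^ (k + 1) + 1 / 2⌋ = ⌊x / 2 ^ k⌋ - ⌊x / 2 ^ (k + 1)⌋ := by
    intro k
    have h := hermite_two (x / 2 ^ (k + 1))
    have h2 : 2 * (x / 2 ^ (k + 1)) = x / 2 ^ k := by
      rw [pow_succ]; field_simp
    rw [h2] at h
    omega
  have hzero : ∀ k : ℕ, N ≤ k → ⌊x / 2 ^ (k + 1) + 1 / 2⌋ = 0 := by
    intro k hk
    apply Int.floor_eq_zero_iff.2
    constructor
    · have : 0 ≤ x / 2 ^ (k + 1) := by positivity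
      linarith
    · have h1 : x < 2 ^ k := lt_of_lt_of_le hN
        (pow_le_pow_right₀ (by norm_num) hk)
      have h2 : x / 2 ^ (k + 1) < 1/2 := by
        rw [div_lt_iff₀ (by positivity), pow_succ]
        linarith
      linarith
  have hsupp : (Function.support fun k : ℕ => ⌊x / 2 ^ (k + 1) + 1 / 2⌋) ⊆
      ↑(Finset.range N) := by
    intro k hk
    simp only [Function.mem_support] at hk
    simp only [Finset.coe_range, Set.mem_Iio]
    by_contra h
    exact hk (hzero k (by omega))
  rw [finsum_eq_sum_of_support_subset _ hsupp]
  have : ∑ k ∈ Finset.range N, ⌊x / 2 ^ (k + 1) + 1 / 2⌋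
      = ∑ k ∈ Finset.range N, (⌊x / 2 ^ k⌋ - ⌊x / 2 ^ (k + 1)⌋) := by
    exact Finset.sum_congr rfl fun k _ => hterm k
  rw [this, Finset.sum_range_sub' (fun k => ⌊x / 2 ^ k⌋)]
  have hNzero : ⌊x / 2 ^ N⌋ = 0 := by
    apply Int.floor_eq_zero_iff.2
    constructor
    · positivity
    · rw [div_lt_one (by positivity)]; exact hN
  simp [hNzero]
end

section
/- For every natural number n and every j ≥ 1, ∑_{i≥1} ⌊(⌊n/2^i⌋ + j)/(2j)⌋ = ⌊n/(2j)⌋. -/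
/-!
With `F n = ⌊n/(2j)⌋ = ⌊⌊n/2⌋/j⌋`, Hermite's identity `⌊x⌋ + ⌊x + 1/2⌋ = ⌊2x⌋` at `x = ⌊n/2⌋/(2j)`
gives `F n = ⌊(⌊n/2⌋ + j)/(2j)⌋ + F ⌊n/2⌋`, and the sum telescopes down to `F 0 = 0`.
-/

theorem Nat.div_two_mul_add_add_div_two_mul (a j : ℕ) :
    a / (2 * j) + (a + j) / (2 * j) = a / j := by
  rcases Nat.eq_zero_or_pos j with rfl | hj
  · simp
  obtain ⟨q, r, hr, rfl⟩ : ∃ q r, r < 2 * j ∧ a = r + 2 * j * q :=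
    ⟨a / (2 * j), a % (2 * j), Nat.mod_lt _ (by omega), (Nat.mod_add_div a _).symm⟩
  have hshift : r + 2 * j * q + j = r + j + 2 * j * q := by ring
  have hregroup : r + 2 * j * q = r + j * (2 * q) := by ring
  rw [hshift, Nat.add_mul_div_left _ _ (by omega), Nat.add_mul_div_left _ _ (by omega),
    hregroup, Nat.add_mul_div_left _ _ hj, Nat.div_eq_of_lt hr]
  rcases lt_or_ge r j with hrj | hrj
  · rw [Nat.div_eq_of_lt hrj, Nat.div_eq_of_lt (by omega)]
    omega
  · rw [Nat.div_eq_of_lt_le (k := 1) (by omega) (by omega),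
      Nat.div_eq_of_lt_le (k := 1) (by omega) (by omega)]
    omega

theorem Nat.sum_range_div_two_pow_add_eq {M : Type*} [AddCommMonoid M] (h F : ℕ → M)
    (hF : ∀ n, F n = h (n / 2) + F (n / 2)) (n m : ℕ) :
    ∑ i ∈ Finset.range m, h (n / 2 ^ (i + 1)) + F (n / 2 ^ m) = F n := by
  induction m with
  | zero => simp
  | succ m ih =>
    rw [Finset.sum_range_succ, add_assoc, Nat.pow_succ, ← Nat.div_div_eq_div_mul, ← hF, ih]

theorem Nat.finsum_div_two_pow_eq {M : Type*} [AddCommMonoid M] (h F : ℕ → M)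
    (hF : ∀ n, F n = h (n / 2) + F (n / 2)) (h0 : h 0 = 0) (F0 : F 0 = 0) (n : ℕ) :
    ∑ᶠ i : ℕ, h (n / 2 ^ (i + 1)) = F n := by
  have hlarge : ∀ i ≥ n, n / 2 ^ i = 0 := fun i hi =>
    Nat.div_eq_of_lt ((Nat.lt_two_pow_self).trans_le (Nat.pow_le_pow_right two_pos hi))
  have hsupp : (Function.support fun i => h (n / 2 ^ (i + 1))) ⊆ Finset.range n := by
    intro i hi
    by_contra hin
    simp only [Finset.coe_range, Set.mem_Iio, not_lt] at hin
    exact hi (by simp only [hlarge (i + 1) (by omega), h0])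
  rw [finsum_eq_sum_of_support_subset _ hsupp, ← Nat.sum_range_div_two_pow_add_eq h F hF n n,
    hlarge n le_rfl, F0, add_zero]

theorem sum_floor_div_shift_general (n j : ℕ) :
    ∑ᶠ i : ℕ, (n / 2 ^ (i + 1) + j) / (2 * j) = n / (2 * j) := by
  refine Nat.finsum_div_two_pow_eq (fun m => (m + j) / (2 * j)) (· / (2 * j)) (fun m => ?_)
    (Nat.div_eq_zero_iff.2 (by omega)) (Nat.zero_div _) n
  rw [add_comm, Nat.div_two_mul_add_add_div_two_mul, Nat.div_div_eq_div_mul]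

theorem sum_floor_div_shift (n j : ℕ) (hj : 1 ≤ j) :
    ∑ᶠ i : ℕ, (n / 2 ^ (i + 1) + j) / (2 * j) = n / (2 * j) :=
  sum_floor_div_shift_general n j
end

section
/- For all integers n ≥ 2, all integers j ≥ 1, and all integers k with 1 ≤ k ≤ ⌊(n-1)/2⌋, we have ⌊(n-2)/(2j)⌋ ≤ ⌊(k-1)/(2j) + 1/2⌋ + ⌊(n-k-2)/(2j) + 1/2⌋. -/
/-!
Write `d = 2j`. For an integer `p`, rounding `p / d` to the nearest integer gives `(p + j) / d`
in integer division, so each rounded term is at least `(p - j + 1) / d`. With `a = k - 1` and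
`b = n - k - 2` the two rounded terms therefore sum to more than `(a + b + 1) / d - 1`, and
`a + b + 1 = n - 2`.
-/

section FloorRing

variable {K : Type*} [Field K] [LinearOrder K] [IsOrderedRing K] [FloorRing K]

theorem Int.floor_intCast_div_intCast_of_nonneg (p d : ℤ) (hd : 0 ≤ d) :
    ⌊(p : K) / d⌋ = p / d := by
  rw [Int.floor_div_cast_of_nonneg hd, Int.floor_intCast]

theorem Int.floor_intCast_div_two_mul_add_half (p j : ℤ) (hj : 0 < j) :
    ⌊(p : K) / (2 * j) + 1 / 2⌋ = (p + j) / (2 * j) := by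
  have hj' : (j : K) ≠ 0 := by exact_mod_cast hj.ne'
  rw [← Int.floor_intCast_div_intCast_of_nonneg (K := K) _ _ (by omega)]
  congr 1
  push_cast
  field_simp

end FloorRing

theorem Int.add_add_one_ediv_two_mul_le (a b j : ℤ) (hj : 0 < j) :
    (a + b + 1) / (2 * j) ≤ (a + j) / (2 * j) + (b + j) / (2 * j) := by
  have hd : 0 < 2 * j := by omega
  have ha := Int.lt_ediv_add_one_mul_self (a + j) hd
  have hb := Int.lt_ediv_add_one_mul_self (b + j) hd
  rw [← Int.lt_add_one_iff, Int.ediv_lt_iff_lt_mul hd]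
  linarith

theorem floor_le_round_sum_general (n j k : ℤ) (hj : 1 ≤ j) :
    ⌊((n : ℚ) - 2) / (2 * j)⌋ ≤
      ⌊((k : ℚ) - 1) / (2 * j) + 1 / 2⌋ + ⌊((n : ℚ) - k - 2) / (2 * j) + 1 / 2⌋ := by
  have key := Int.add_add_one_ediv_two_mul_le (k - 1) (n - k - 2) j hj
  rw [show k - 1 + (n - k - 2) + 1 = n - 2 by ring,
    ← Int.floor_intCast_div_intCast_of_nonneg (K := ℚ) _ _ (by omega),
    ← Int.floor_intCast_div_two_mul_add_half (K := ℚ) _ _ hj,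
    ← Int.floor_intCast_div_two_mul_add_half (K := ℚ) _ _ hj] at key
  exact_mod_cast key

theorem floor_le_round_sum (n j k : ℤ) (hn : 2 ≤ n) (hj : 1 ≤ j)
    (hk : 1 ≤ k) (hk' : k ≤ (n - 1) / 2) :
    ⌊((n : ℚ) - 2) / (2 * j)⌋ ≤
      ⌊((k : ℚ) - 1) / (2 * j) + 1 / 2⌋ + ⌊((n : ℚ) - k - 2) / (2 * j) + 1 / 2⌋ :=
  floor_le_round_sum_general n j k hj
end

section
/- Define S_n(z) = ∏_{i=1}^n (1 + z^i). Then S_n(z) = ∏_{j≥1} Φ_{2j}(z)^{⌊(n+j)/(2j)⌋}, where Φ_m is the m-th cyclotomic polynomial and the product is over all integers j ≥ 1 (finitely many exponents are nonzero). -/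
open Polynomial

lemma one_add_X_pow (i : ℕ) (hi : 1 ≤ i) :
    (1 + X ^ i : Polynomial ℤ) = ∏ d ∈ (2*i).divisors \ i.divisors, cyclotomic d ℤ := by
  have h0 : (X ^ i - 1 : Polynomial ℤ) ≠ 0 := by
    simpa using X_pow_sub_C_ne_zero (R := ℤ) (by omega : 0 < i) 1
  have hsub : i.divisors ⊆ (2*i).divisors :=
    Nat.divisors_subset_of_dvd (by positivity) ⟨2, by ring⟩
  have h := Finset.prod_sdiff (f := fun d => cyclotomic d ℤ) hsub
  rw [prod_cyclotomic_eq_X_pow_sub_one (by omega), prod_cyclotomic_eq_X_pow_sub_one (by omega)] at h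
  have key : (X ^ i - 1 : Polynomial ℤ) * (1 + X ^ i) = X ^ (2*i) - 1 := by
    rw [two_mul, pow_add]; ring
  apply mul_left_cancel₀ h0
  rw [key, ← h]; ring

lemma mem_diff_two_dvd {i d : ℕ} (hi1 : 1 ≤ i) (hd : d ∈ (2*i).divisors \ i.divisors) :
    2 ∣ d ∧ d ∣ 2*i ∧ ¬ d ∣ i := by
  simp only [Finset.mem_sdiff, Nat.mem_divisors] at hd
  obtain ⟨⟨hdvd, _⟩, hnd⟩ := hd
  have hni : ¬ d ∣ i := fun hdi => hnd ⟨hdi, by omega⟩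
  refine ⟨?_, hdvd, hni⟩
  rcases Nat.even_or_odd d with h | h
  · exact h.two_dvd
  · exact absurd (Nat.Coprime.dvd_of_dvd_mul_left
      (h.coprime_two_right) hdvd) hni

lemma sdiff_eq_image (i n : ℕ) (hi1 : 1 ≤ i) (hin : i ≤ n) :
    ∏ d ∈ (2*i).divisors \ i.divisors, cyclotomic d ℤ =
    ∏ j ∈ (Finset.Icc 1 n).filter (fun j => j ∣ i ∧ ¬ (2*j ∣ i)), cyclotomic (2*j) ℤ := by
  refine (Finset.prod_nbij' (fun j => 2 * j) (fun d => d / 2) ?_ ?_ ?_ ?_ (fun _ _ => rfl)).symm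
  · intro j hj
    simp only [Finset.mem_filter, Finset.mem_Icc] at hj
    obtain ⟨⟨hj1, hjn⟩, hji, hn2j⟩ := hj
    simp only [Finset.mem_sdiff, Nat.mem_divisors]
    exact ⟨⟨mul_dvd_mul_left 2 hji, by omega⟩, fun h => hn2j h.1⟩
  · intro d hd
    obtain ⟨⟨j, rfl⟩, hdvd, hni⟩ := mem_diff_two_dvd hi1 hd
    have hji : j ∣ i := (mul_dvd_mul_iff_left (by norm_num : (2:ℕ) ≠ 0)).mp hdvd
    have hj1 : 1 ≤ j := by
      rcases Nat.eq_zero_or_pos j with rfl | h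
      · simp at hdvd; omega
      · exact h
    simp only [Finset.mem_filter, Finset.mem_Icc]
    have h2 : 2 * j / 2 = j := by omega
    rw [h2]
    exact ⟨⟨hj1, le_trans (Nat.le_of_dvd (by omega) hji) hin⟩, hji, fun h => hni h⟩
  · intro j _; show 2 * j / 2 = j; omega
  · intro d hd
    obtain ⟨h2, _, _⟩ := mem_diff_two_dvd hi1 hd
    show 2 * (d / 2) = d; omega

lemma count_lemma (n j : ℕ) (hj : 1 ≤ j) :
    ((Finset.Icc 1 n).filter (fun i => j ∣ i ∧ ¬ (2*j ∣ i))).card = (n + j) / (2*j) := by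
  have hset : (Finset.Icc 1 n).filter (fun i => j ∣ i ∧ ¬ (2*j ∣ i)) =
      (Finset.Icc 1 n).filter (fun i => j ∣ i) \ (Finset.Icc 1 n).filter (fun i => 2*j ∣ i) := by
    ext x
    simp only [Finset.mem_filter, Finset.mem_sdiff]
    tauto
  have hsub : (Finset.Icc 1 n).filter (fun i => 2*j ∣ i) ⊆ (Finset.Icc 1 n).filter (fun i => j ∣ i) := by
    intro x hx
    simp only [Finset.mem_filter] at hx ⊢
    exact ⟨hx.1, dvd_trans (dvd_mul_left j 2) hx.2⟩
  rw [hset, Finset.card_sdiff_of_subset hsub]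
  have hIcc : Finset.Icc 1 n = Finset.Ioc 0 n := Finset.Icc_add_one_left_eq_Ioc 0 n
  rw [hIcc, Nat.Ioc_filter_dvd_card_eq_div, Nat.Ioc_filter_dvd_card_eq_div]
  have h1 : n / (2*j) = n / j / 2 := by rw [Nat.div_div_eq_div_mul, mul_comm]
  have h2 : (n+j) / (2*j) = (n / j + 1) / 2 := by
    rw [mul_comm, ← Nat.div_div_eq_div_mul, Nat.add_div_right _ (by omega)]
  rw [h2, h1]
  generalize n / j = m
  omega

noncomputable def S (n : ℕ) : Polynomial ℤ := ∏ i ∈ Finset.Icc 1 n, (1 + X ^ i)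

theorem S_eq_prod_cyclotomic (n : ℕ) :
    S n = ∏ᶠ j : ℕ, (cyclotomic (2 * (j + 1)) ℤ) ^ ((n + (j + 1)) / (2 * (j + 1))) := by
  have hsupp : (Function.mulSupport fun j : ℕ =>
      (cyclotomic (2 * (j + 1)) ℤ) ^ ((n + (j + 1)) / (2 * (j + 1)))) ⊆ ↑(Finset.range n) := by
    intro j hj
    simp only [Function.mem_mulSupport] at hj
    by_contra h
    simp only [Finset.coe_range, Set.mem_Iio, not_lt] at h
    exact hj (by rw [Nat.div_eq_of_lt (by omega), pow_zero])
  rw [finprod_eq_prod_of_mulSupport_subset _ hsupp]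
  have hre : ∏ j ∈ Finset.range n, (cyclotomic (2*(j+1)) ℤ) ^ ((n+(j+1))/(2*(j+1)))
      = ∏ j ∈ Finset.Icc 1 n, (cyclotomic (2*j) ℤ) ^ ((n+j)/(2*j)) := by
    refine Finset.prod_nbij' (fun j => j + 1) (fun j => j - 1) ?_ ?_ ?_ ?_ (fun _ _ => rfl)
    · intro a ha; simp only [Finset.mem_range] at ha; simp only [Finset.mem_Icc]; omega
    · intro a ha; simp only [Finset.mem_Icc] at ha; simp only [Finset.mem_range]; omega
    · intro a _; show a + 1 - 1 = a; omega
    · intro a ha; simp only [Finset.mem_Icc] at ha; show a - 1 + 1 = a; omega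
  rw [hre]
  unfold S
  calc ∏ i ∈ Finset.Icc 1 n, (1 + X ^ i : Polynomial ℤ)
      = ∏ i ∈ Finset.Icc 1 n, ∏ j ∈ (Finset.Icc 1 n).filter (fun j => j ∣ i ∧ ¬ (2*j ∣ i)),
          cyclotomic (2*j) ℤ := by
        refine Finset.prod_congr rfl fun i hi => ?_
        rw [Finset.mem_Icc] at hi
        rw [one_add_X_pow i hi.1, sdiff_eq_image i n hi.1 hi.2]
    _ = ∏ j ∈ Finset.Icc 1 n, ∏ i ∈ (Finset.Icc 1 n).filter (fun i => j ∣ i ∧ ¬ (2*j ∣ i)),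
          cyclotomic (2*j) ℤ := by
        refine Finset.prod_comm' fun i j => ?_
        simp only [Finset.mem_filter, Finset.mem_Icc]
        tauto
    _ = ∏ j ∈ Finset.Icc 1 n, (cyclotomic (2*j) ℤ) ^ ((n+j)/(2*j)) := by
        refine Finset.prod_congr rfl fun j hj => ?_
        rw [Finset.mem_Icc] at hj
        rw [Finset.prod_const, count_lemma n j hj.1]
end

section
/- Define D_n(z) = ∏_{j≥1} S_{⌊(n-2)/2^j⌋}(z), where S_m(z) = ∏_{i=1}^m (1 + z^i). Then D_n(z) = ∏_{j≥1} Φ_{2j}(z)^{⌊(n-2)/(2j)⌋}, where Φ_m is the m-th cyclotomic polynomial. -/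
/-!
Splitting `X ^ (2N) - 1 = (X ^ N - 1) (1 + X ^ N)` into cyclotomic factors gives
`1 + X ^ N = ∏ Φ_{2k}` over the divisors `k ∣ N` with `2k ∤ N`. Counting the `i ≤ M` with `k ∣ i`
and `2k ∤ i` then gives `S_M = ∏_k Φ_{2k} ^ (⌊M/k⌋ - ⌊M/2k⌋)`, that is `S_M · T(⌊M/2⌋) = T(M)` for
`T(M) = ∏_k Φ_{2k} ^ ⌊M/k⌋`. So the product defining `D_n` telescopes to
`T(⌊(n-2)/2⌋) = ∏_k Φ_{2k} ^ ⌊(n-2)/2k⌋`.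
-/

open Polynomial

noncomputable def D (n : ℕ) : Polynomial ℤ := ∏ᶠ j : ℕ, S ((n - 2) / 2 ^ (j + 1))

open Finset

theorem Finset.prod_range_mul_eq_of_mul_succ_eq {M : Type*} [CommMonoid M] {a b : ℕ → M}
    (h : ∀ j, a j * b (j + 1) = b j) (J : ℕ) : (∏ j ∈ range J, a j) * b J = b 0 := by
  induction J with
  | zero => simp
  | succ J ih => rw [prod_range_succ, mul_assoc, h, ih]

theorem finprod_eq_prod_range_of_eq_one {M : Type*} [CommMonoid M] {f : ℕ → M} {n : ℕ}
    (h : ∀ j, n ≤ j → f j = 1) : ∏ᶠ j, f j = ∏ j ∈ range n, f j :=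
  finprod_eq_prod_of_mulSupport_subset f fun j hj ↦ by
    by_contra hjn
    exact hj (h j (by simpa using hjn))

theorem Nat.div_two_pow_succ_eq_zero {m j : ℕ} (hj : m ≤ j) : m / 2 ^ (j + 1) = 0 :=
  Nat.div_eq_of_lt (Nat.lt_two_pow_self.trans_le (Nat.pow_le_pow_right two_pos (by omega)))

theorem Nat.succ_div_sub_succ_div_two_mul (M k : ℕ) :
    (M + 1) / k - (M + 1) / (2 * k) =
      M / k - M / (2 * k) + if k ∣ M + 1 ∧ ¬ 2 * k ∣ M + 1 then 1 else 0 := by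
  have hle : M / (2 * k) ≤ M / k := by
    rw [mul_comm, ← Nat.div_div_eq_div_mul]
    exact Nat.div_le_self _ _
  have hdvd : 2 * k ∣ M + 1 → k ∣ M + 1 := dvd_of_mul_left_dvd
  rw [Nat.succ_div, Nat.succ_div (b := 2 * k)]
  split_ifs <;> omega

theorem prod_cyclotomic_two_mul_eq_one_add_X_pow {R : Type*} [CommRing R] {N : ℕ} (hN : N ≠ 0) :
    ∏ k ∈ N.divisors with ¬ 2 * k ∣ N, cyclotomic (2 * k) R = 1 + X ^ N := by
  have hdiv : (2 * N).divisors \ N.divisors = {k ∈ N.divisors | ¬ 2 * k ∣ N}.image (2 * ·) := by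
    ext d
    simp only [mem_sdiff, Nat.mem_divisors, mem_image, mem_filter]
    constructor
    · rintro ⟨⟨hd, -⟩, hdN⟩
      obtain ⟨k, rfl⟩ : 2 ∣ d := by
        by_contra hodd
        exact hdN ⟨(Nat.coprime_two_right.mpr (Nat.odd_iff.mpr (by omega))).dvd_of_dvd_mul_left hd,
          hN⟩
      exact ⟨k, ⟨⟨Nat.dvd_of_mul_dvd_mul_left two_pos hd, hN⟩, fun h ↦ hdN ⟨h, hN⟩⟩, rfl⟩
    · rintro ⟨k, ⟨⟨hk, -⟩, hkN⟩, rfl⟩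
      exact ⟨⟨mul_dvd_mul_left 2 hk, by omega⟩, fun h ↦ hkN h.1⟩
  have hsub : N.divisors ⊆ (2 * N).divisors :=
    Nat.divisors_subset_of_dvd (by omega) (dvd_mul_left N 2)
  have hcancel : (X ^ N - 1) * (1 + X ^ N) =
      (X ^ N - 1) * ∏ k ∈ N.divisors with ¬ 2 * k ∣ N, cyclotomic (2 * k) R :=
    calc (X ^ N - 1) * (1 + X ^ N) = X ^ (2 * N) - 1 := by ring
      _ = (∏ d ∈ (2 * N).divisors \ N.divisors, cyclotomic d R) *
            ∏ d ∈ N.divisors, cyclotomic d R := by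
        rw [prod_sdiff hsub, prod_cyclotomic_eq_X_pow_sub_one (by omega)]
      _ = _ := by
        rw [hdiv, prod_image (fun a _ b _ h ↦ by simpa using h),
          prod_cyclotomic_eq_X_pow_sub_one (by omega), mul_comm]
  have hmonic : (X ^ N - 1 : R[X]).Monic := by simpa using monic_X_pow_sub_C (1 : R) hN
  exact (hmonic.isRegular.left hcancel).symm

theorem one_add_X_pow_eq_prod_Icc {R : Type*} [CommRing R] {N L : ℕ} (hN : N ≠ 0) (hNL : N ≤ L) :
    1 + X ^ N = ∏ k ∈ Icc 1 L, cyclotomic (2 * k) R ^ (if k ∣ N ∧ ¬ 2 * k ∣ N then 1 else 0) := by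
  simp_rw [pow_ite, pow_one, pow_zero]
  rw [← prod_filter, ← prod_cyclotomic_two_mul_eq_one_add_X_pow hN]
  congr 1
  ext k
  simp only [mem_filter, mem_Icc, Nat.mem_divisors]
  constructor
  · rintro ⟨⟨hk, -⟩, h2k⟩
    exact ⟨⟨Nat.pos_of_dvd_of_pos hk (by omega), (Nat.le_of_dvd (by omega) hk).trans hNL⟩, hk, h2k⟩
  · rintro ⟨-, hk, h2k⟩
    exact ⟨⟨hk, hN⟩, h2k⟩

theorem S_eq_prod_cyclotomic_s8 {M L : ℕ} (hML : M ≤ L) :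
    S M = ∏ k ∈ Icc 1 L, cyclotomic (2 * k) ℤ ^ (M / k - M / (2 * k)) := by
  induction M with
  | zero => simp [S]
  | succ M ih =>
    rw [S, prod_Icc_succ_top (by omega), ← S, ih (by omega),
      one_add_X_pow_eq_prod_Icc M.succ_ne_zero hML, ← prod_mul_distrib]
    refine prod_congr rfl fun k _ ↦ ?_
    rw [← pow_add, Nat.succ_div_sub_succ_div_two_mul]

noncomputable def evenCyclotomicProd (L M : ℕ) : ℤ[X] :=
  ∏ k ∈ Icc 1 L, cyclotomic (2 * k) ℤ ^ (M / k)

theorem S_mul_evenCyclotomicProd_div_two {M L : ℕ} (hML : M ≤ L) :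
    S M * evenCyclotomicProd L (M / 2) = evenCyclotomicProd L M := by
  rw [S_eq_prod_cyclotomic_s8 hML, evenCyclotomicProd, evenCyclotomicProd, ← prod_mul_distrib]
  refine prod_congr rfl fun k _ ↦ ?_
  have hle : M / (2 * k) ≤ M / k := by
    rw [mul_comm, ← Nat.div_div_eq_div_mul]
    exact Nat.div_le_self _ _
  rw [← pow_add, Nat.div_div_eq_div_mul, Nat.sub_add_cancel hle]

theorem prod_range_S_div_two_pow (m : ℕ) :
    ∏ j ∈ range m, S (m / 2 ^ (j + 1)) = evenCyclotomicProd m (m / 2) := by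
  have htel := prod_range_mul_eq_of_mul_succ_eq (a := fun j ↦ S (m / 2 ^ (j + 1)))
    (b := fun j ↦ evenCyclotomicProd m (m / 2 ^ (j + 1))) (fun j ↦ by
      rw [pow_succ 2 (j + 1), ← Nat.div_div_eq_div_mul]
      exact S_mul_evenCyclotomicProd_div_two (Nat.div_le_self _ _)) m
  simpa [Nat.div_two_pow_succ_eq_zero le_rfl, evenCyclotomicProd] using htel

theorem D_eq_prod_cyclotomic_general (n : ℕ) :
    D n = ∏ᶠ j : ℕ, (cyclotomic (2 * (j + 1)) ℤ) ^ ((n - 2) / (2 * (j + 1))) := by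
  rw [D]
  generalize n - 2 = m
  rw [finprod_eq_prod_range_of_eq_one (n := m) fun j hj ↦ by
      simp [Nat.div_two_pow_succ_eq_zero hj, S],
    finprod_eq_prod_range_of_eq_one (n := m) fun j hj ↦ by
      rw [Nat.div_eq_of_lt (by omega), pow_zero],
    prod_range_S_div_two_pow, evenCyclotomicProd, range_eq_Ico, ← Ico_add_one_right_eq_Icc]
  simp only [Nat.div_div_eq_div_mul]
  exact (prod_Ico_add' (fun k ↦ cyclotomic (2 * k) ℤ ^ (m / (2 * k))) 0 m 1).symm

theorem D_eq_prod_cyclotomic (n : ℕ) (hn : 2 ≤ n) :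
    D n = ∏ᶠ j : ℕ, (cyclotomic (2 * (j + 1)) ℤ) ^ ((n - 2) / (2 * (j + 1))) :=
  D_eq_prod_cyclotomic_general n
end

section
/- Define T_n(z) as in the tatami generating polynomial: T_n(z) = 2 ∑_{i=1}^{⌊(n-1)/2⌋} S_{n-i-2}(z) S_{i-1}(z) z^{n-i-1} + (S_{⌊(n-2)/2⌋}(z))². Then for n ≥ 2, the degree of T_n(z) is (n²-n)/2 - (n-1). -/
/-!
Since every factor `1 + X ^ i` is monic of degree `i`, `deg S_m = m (m + 1) / 2`. With
`a = n - i - 2` and `b = i - 1`, twice the degree of the `i`-th summand of `T_n` is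
`a (a + 1) + b (b + 1) + 2 (a + 1)`, which for fixed `a + b = n - 3` falls short of its value at
`b = 0` by `2 b (a + 1)`. So the `i = 1` summand `S_{n-3} X^{n-2}`, of degree `(n - 1)(n - 2) / 2`,
strictly dominates all other summands and the square `S_{⌊(n-2)/2⌋}²`, and its coefficient `2`
does not vanish over `ℤ`.
-/

open Polynomial

noncomputable def T (n : ℕ) : Polynomial ℤ :=
  2 * ∑ i ∈ Finset.Icc 1 ((n - 1) / 2), S (n - i - 2) * S (i - 1) * X ^ (n - i - 1)
    + (S ((n - 2) / 2)) ^ 2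

lemma monic_one_add_X_pow {R : Type*} [CommSemiring R] {i : ℕ} (hi : i ≠ 0) :
    (1 + X ^ i : R[X]).Monic := by
  simpa [add_comm] using monic_X_pow_add_C (1 : R) hi

lemma natDegree_sum_lt {ι R : Type*} [Semiring R] {s : Finset ι} {f : ι → R[X]} {n : ℕ}
    (hn : 0 < n) (h : ∀ i ∈ s, (f i).natDegree < n) : (∑ i ∈ s, f i).natDegree < n :=
  Nat.lt_of_le_pred hn <| natDegree_sum_le_of_forall_le _ _ fun i hi => Nat.le_pred_of_lt (h i hi)

lemma natDegree_two_mul {R : Type*} [Semiring R] [NoZeroDivisors R] [NeZero (2 : R)]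
    (p : R[X]) : (2 * p).natDegree = p.natDegree :=
  natDegree_C_mul (a := (2 : R)) two_ne_zero

lemma S_zero : S 0 = 1 := rfl

lemma S_succ (m : ℕ) : S (m + 1) = S m * (1 + X ^ (m + 1)) :=
  Finset.prod_Icc_succ_top (by omega) _

lemma S_monic (m : ℕ) : (S m).Monic := by
  induction m with
  | zero => exact monic_one
  | succ m ih => rw [S_succ]; exact ih.mul (monic_one_add_X_pow m.succ_ne_zero)

lemma two_mul_natDegree_S (m : ℕ) : 2 * (S m).natDegree = m * (m + 1) := by
  induction m with
  | zero => simp [S_zero]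
  | succ m ih =>
    have h : (1 + X ^ (m + 1) : ℤ[X]).natDegree = m + 1 := by
      simpa [add_comm] using natDegree_X_pow_add_C (n := m + 1) (r := (1 : ℤ))
    rw [S_succ, (S_monic m).natDegree_mul (monic_one_add_X_pow m.succ_ne_zero), h]
    linarith

lemma two_mul_natDegree_S_mul_S_mul_X_pow (a b c : ℕ) :
    2 * (S a * S b * X ^ c).natDegree = a * (a + 1) + b * (b + 1) + 2 * c := by
  rw [((S_monic a).mul (S_monic b)).natDegree_mul (monic_X_pow c),
    (S_monic a).natDegree_mul (S_monic b), natDegree_X_pow]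
  linarith [two_mul_natDegree_S a, two_mul_natDegree_S b]

lemma natDegree_S_mul_S_mul_X_pow_lt {a b : ℕ} (hb : 1 ≤ b) :
    (S a * S b * X ^ (a + 1)).natDegree < (S (a + b) * S 0 * X ^ (a + b + 1)).natDegree := by
  have h₁ := two_mul_natDegree_S_mul_S_mul_X_pow a b (a + 1)
  have h₂ := two_mul_natDegree_S_mul_S_mul_X_pow (a + b) 0 (a + b + 1)
  nlinarith

lemma natDegree_S_sq_lt {m a : ℕ} (hm : 2 * m ≤ a + 1) :
    (S m ^ 2).natDegree < (S a * S 0 * X ^ (a + 1)).natDegree := by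
  have h₁ := two_mul_natDegree_S m
  have h₂ := two_mul_natDegree_S_mul_S_mul_X_pow a 0 (a + 1)
  rw [natDegree_pow]
  nlinarith

theorem T_natDegree (n : ℕ) (hn : 2 ≤ n) :
    (T n).natDegree = (n ^ 2 - n) / 2 - (n - 1) := by
  rcases hn.eq_or_lt with rfl | hn
  · simp [T, S]
  obtain ⟨a, rfl⟩ : ∃ a, n = a + 3 := ⟨n - 3, by omega⟩
  set lead := S a * S 0 * X ^ (a + 1)
  set rest := ∑ i ∈ Finset.Ioc 1 ((a + 3 - 1) / 2), S (a + 3 - i - 2) * S (i - 1) * X ^ (a + 3 - i - 1)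
  have hT : T (a + 3) = 2 * lead + (2 * rest + S ((a + 3 - 2) / 2) ^ 2) := by
    rw [T, ← Finset.add_sum_Ioc_eq_sum_Icc (by omega), mul_add, add_assoc]
    rfl
  have hlead : 2 * lead.natDegree = a * (a + 1) + 2 * (a + 1) :=
    two_mul_natDegree_S_mul_S_mul_X_pow a 0 (a + 1)
  have hrest : rest.natDegree < lead.natDegree := by
    refine natDegree_sum_lt (by omega) fun i hi => ?_
    obtain ⟨b, c, rfl, rfl⟩ : ∃ b c, i = b + 1 ∧ a = c + b := by
      simp only [Finset.mem_Ioc] at hi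
      exact ⟨i - 1, a - (i - 1), by omega, by omega⟩
    rw [show c + b + 3 - (b + 1) - 2 = c by omega, Nat.add_sub_cancel,
      show c + b + 3 - (b + 1) - 1 = c + 1 by omega]
    exact natDegree_S_mul_S_mul_X_pow_lt (by simp at hi; omega)
  have hsq := natDegree_S_sq_lt (m := (a + 3 - 2) / 2) (a := a) (by omega)
  have harith : (a + 3) ^ 2 = 2 * lead.natDegree + 2 * (a + 2) + (a + 3) := by
    rw [hlead]; ring
  rw [hT, natDegree_add_eq_left_of_natDegree_lt, natDegree_two_mul]
  · omega
  · rw [natDegree_two_mul]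
    exact (natDegree_add_le _ _).trans_lt (max_lt (by rwa [natDegree_two_mul]) hsq)
end

section
/- For every n ≥ 2, the quantity binom(n-1, 2) - ∑_{k≥1} binom(⌊(n-2)/2^k⌋ + 1, 2) equals ∑_{k=1}^{n-2} op(k), where op(k) is the largest odd divisor of k. -/
/-!
Put `F m = ∑_{k ≥ 1} C(⌊m / 2^k⌋ + 1, 2)`. Passing from `m` to `m + 1`, the quotient
`⌊m / 2^k⌋` grows by one exactly when `2^k ∣ m + 1`, so `F (m + 1) - F m` is the sum of
`(m + 1) / 2^k` over `1 ≤ k ≤ v₂(m + 1)`, which telescopes to `(m + 1) - op(m + 1)`.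
As `C(m + 2, 2) - C(m + 1, 2) = m + 1`, the left-hand side grows by `op(m + 1)`, and the
identity follows by induction on `m = n - 2`.
-/

open Finset

theorem Nat.choose_two_succ_div_add_one (m d : ℕ) :
    ((m + 1) / d + 1).choose 2 = (m / d + 1).choose 2 + if d ∣ m + 1 then (m + 1) / d else 0 := by
  rw [Nat.succ_div]
  split_ifs
  · rw [Nat.choose_succ_succ' (m / d + 1) 1, Nat.choose_one_right, add_comm]
  · rfl

theorem Nat.sum_range_div_two_pow_succ_add_div_two_pow {m v : ℕ} (h : 2 ^ v ∣ m) :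
    ∑ k ∈ range v, m / 2 ^ (k + 1) + m / 2 ^ v = m := by
  induction v with
  | zero => simp
  | succ v ih =>
    have halve : m / 2 ^ (v + 1) + m / 2 ^ (v + 1) = m / 2 ^ v := by
      obtain ⟨c, rfl⟩ := h
      rw [Nat.mul_div_cancel_left _ (by positivity), pow_succ, mul_assoc,
        Nat.mul_div_cancel_left _ (by positivity)]
      ring
    rw [sum_range_succ, add_assoc, halve, ih (dvd_trans (pow_dvd_pow 2 v.le_succ) h)]

theorem Nat.sum_range_ite_two_pow_dvd_add_ordCompl {m N : ℕ} (hm : m ≠ 0)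
    (hN : m.factorization 2 ≤ N) :
    ∑ k ∈ range N, (if 2 ^ (k + 1) ∣ m then m / 2 ^ (k + 1) else 0) + ordCompl[2] m = m := by
  have hfilter : (range N).filter (fun k => 2 ^ (k + 1) ∣ m) = range (m.factorization 2) := by
    ext k
    rw [mem_filter, mem_range, mem_range, Nat.prime_two.pow_dvd_iff_le_factorization hm]
    omega
  rw [← sum_filter, hfilter]
  exact Nat.sum_range_div_two_pow_succ_add_div_two_pow (Nat.ordProj_dvd m 2)

theorem Nat.sum_range_choose_two_div_two_pow_add_sum_ordCompl {m N : ℕ} (hm : m ≤ N) :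
    ∑ k ∈ range N, (m / 2 ^ (k + 1) + 1).choose 2 + ∑ j ∈ Icc 1 m, ordCompl[2] j
      = (m + 1).choose 2 := by
  induction m with
  | zero => simp
  | succ m ih =>
    have hv : (m + 1).factorization 2 ≤ N :=
      ((Nat.factorization_lt 2 m.succ_ne_zero).trans_le (by omega)).le
    have hstep := Nat.sum_range_ite_two_pow_dvd_add_ordCompl (by omega : m + 1 ≠ 0) hv
    simp only [Nat.choose_two_succ_div_add_one, sum_add_distrib]
    rw [sum_Icc_succ_top (by omega), Nat.choose_succ_succ' (m + 1) 1, Nat.choose_one_right]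
    linarith [ih (by omega)]

theorem finsum_choose_two_div_two_pow_eq_sum_range (m : ℕ) :
    ∑ᶠ k : ℕ, ((m / 2 ^ (k + 1) + 1).choose 2 : ℤ)
      = ∑ k ∈ range m, ((m / 2 ^ (k + 1) + 1).choose 2 : ℤ) := by
  refine finsum_eq_sum_of_support_subset _ fun k hk => ?_
  by_contra hkm
  have hlt : m < 2 ^ (k + 1) :=
    m.lt_two_pow_self.trans_le (Nat.pow_le_pow_right two_pos (by simp at hkm; omega))
  simp [Nat.div_eq_of_lt hlt] at hk

theorem degP_eq_sum_oddPart (n : ℕ) (hn : 2 ≤ n) :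
    ((n - 1).choose 2 : ℤ) - ∑ᶠ k : ℕ, (((n - 2) / 2 ^ (k + 1) + 1).choose 2 : ℤ) =
      ∑ k ∈ Finset.Icc 1 (n - 2), (ordCompl[2] k : ℤ) := by
  obtain ⟨m, rfl⟩ := Nat.exists_eq_add_of_le' hn
  rw [show m + 2 - 1 = m + 1 by omega, Nat.add_sub_cancel,
    finsum_choose_two_div_two_pow_eq_sum_range,
    ← Nat.sum_range_choose_two_div_two_pow_add_sum_ordCompl le_rfl]
  push_cast
  ring
end

section
/- For every positive integer n, (n+1)/2^{v₂(n+1)} = ∑_{k > v₂(n+1)} ⌊(n+1)/2^k + 1/2⌋, where v₂ denotes the 2-adic valuation; in particular the odd part of n+1 equals the tail of the rounding sum ∑_{k≥1}⌊(n+1)/2^k + 1/2⌋ beyond k = v₂(n+1). -/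
/-! Since `round y = (⌊2y⌋ + 1) / 2` and `⌊y⌋ = ⌊2y⌋ / 2` (integer division), the rounding term
`⌊x / 2^(i+1) + 1/2⌋` equals `⌊x / 2^i⌋ - ⌊x / 2^(i+1)⌋`, so the sum telescopes to `⌊x⌋` for
every `x ≥ 0`. Writing `n + 1 = 2^v m` with `v = v₂(n + 1)`, the tail of the sum beyond `k = v` is
this sum for `x = m`. -/

section FloorField

variable {α : Type*} [Field α] [LinearOrder α] [IsStrictOrderedRing α] [FloorRing α]

theorem Int.floor_div_two_add_half (x : α) : ⌊x / 2 + 1 / 2⌋ = ⌊x⌋ - ⌊x / 2⌋ := by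
  have hround : ⌊x / 2 + 1 / 2⌋ = (⌊x⌋ + 1) / 2 := by
    rw [← round_eq, round_eq_div, mul_div_cancel₀ x two_ne_zero]
  have hhalf : ⌊x / 2⌋ = ⌊x⌋ / 2 := by exact_mod_cast Int.floor_div_natCast x 2
  rw [hround, hhalf]
  omega

theorem Int.floor_div_two_pow_succ_add_half (x : α) (i : ℕ) :
    ⌊x / 2 ^ (i + 1) + 1 / 2⌋ = ⌊x / 2 ^ i⌋ - ⌊x / 2 ^ (i + 1)⌋ := by
  rw [pow_succ, ← div_div, Int.floor_div_two_add_half]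

theorem Int.sum_range_floor_div_two_pow_add_half (x : α) (N : ℕ) :
    ∑ i ∈ Finset.range N, ⌊x / 2 ^ (i + 1) + 1 / 2⌋ = ⌊x⌋ - ⌊x / 2 ^ N⌋ := by
  rw [Finset.sum_congr rfl fun i _ => Int.floor_div_two_pow_succ_add_half x i,
    Finset.sum_range_sub', pow_zero, div_one]

theorem Int.floor_div_two_pow_eq_zero {x : α} {N : ℕ} (hx₀ : 0 ≤ x) (hx : x < 2 ^ N) :
    ⌊x / 2 ^ N⌋ = 0 :=
  Int.floor_eq_zero_iff.2 ⟨by positivity, (div_lt_one (by positivity)).2 hx⟩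

theorem Int.finsum_floor_div_two_pow_add_half [Archimedean α] {x : α} (hx : 0 ≤ x) :
    ∑ᶠ i : ℕ, ⌊x / 2 ^ (i + 1) + 1 / 2⌋ = ⌊x⌋ := by
  obtain ⟨N, hN⟩ := pow_unbounded_of_one_lt x one_lt_two
  have hsupport : Function.support (fun i : ℕ => ⌊x / 2 ^ (i + 1) + 1 / 2⌋) ⊆ Finset.range N := by
    refine Function.support_subset_iff'.2 fun i hiN => ?_
    have hNi : N ≤ i := by simpa using hiN
    have hlt (k : ℕ) (hk : i ≤ k) : x < 2 ^ k :=
      hN.trans_le (pow_le_pow_right₀ one_le_two (hNi.trans hk))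
    rw [Int.floor_div_two_pow_succ_add_half, Int.floor_div_two_pow_eq_zero hx (hlt i le_rfl),
      Int.floor_div_two_pow_eq_zero hx (hlt (i + 1) i.le_succ), sub_zero]
  rw [finsum_eq_sum_of_support_subset _ hsupport, Int.sum_range_floor_div_two_pow_add_half,
    Int.floor_div_two_pow_eq_zero hx hN, sub_zero]

end FloorField

theorem Nat.cast_div_two_pow_add {K : Type*} [Field K] [CharZero K] {N v : ℕ} (h : 2 ^ v ∣ N)
    (k : ℕ) :
    (N : K) / 2 ^ (v + k) = ((N / 2 ^ v : ℕ) : K) / 2 ^ k := by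
  rw [Nat.cast_div h (by simp), pow_add, div_div, Nat.cast_pow, Nat.cast_ofNat]

theorem oddPart_eq_round_tail_general (n : ℕ) :
    (((n + 1) / 2 ^ ((n + 1).factorization 2) : ℕ) : ℤ) =
      ∑ᶠ i : ℕ, ⌊((n : ℚ) + 1) / 2 ^ ((n + 1).factorization 2 + i + 1) + 1 / 2⌋ := by
  set v := (n + 1).factorization 2
  have hdvd : 2 ^ v ∣ n + 1 := Nat.ordProj_dvd (n + 1) 2
  simp_rw [add_assoc v, ← Nat.cast_succ, Nat.cast_div_two_pow_add hdvd]
  rw [Int.finsum_floor_div_two_pow_add_half (Nat.cast_nonneg _), Int.floor_natCast]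

theorem oddPart_eq_round_tail (n : ℕ) (hn : 0 < n) :
    (((n + 1) / 2 ^ ((n + 1).factorization 2) : ℕ) : ℤ) =
      ∑ᶠ i : ℕ, ⌊((n : ℚ) + 1) / 2 ^ ((n + 1).factorization 2 + i + 1) + 1 / 2⌋ :=
  oddPart_eq_round_tail_general n
end

section
/- Define T_n(z) = 2 ∑_{i=1}^{⌊(n-1)/2⌋} S_{n-i-2}(z) S_{i-1}(z) z^{n-i-1} + (S_{⌊(n-2)/2⌋}(z))² and D_n(z) = ∏_{j≥1} S_{⌊(n-2)/2^j⌋}(z), with S_m(z) = ∏_{i=1}^m (1+z^i). Let P_n(z) = T_n(z)/D_n(z) (a polynomial by the divisibility theorem). Then for all n ≥ 3, P_n(1) = n·2^{ν(n-2)-1}, where ν(m) is the number of 1-bits in the binary representation of m. -/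
open Polynomial

/-!
Since `1 + X^k = (X^(2k) - 1) / (X^k - 1)`, it is the product of the cyclotomic polynomials `Φ_d`
with `d ∣ 2k`, `d ∤ k`. Hence `Φ_d` does not divide `S_t` for odd `d`, and `Φ_(2e)` occurs in
`S_t` with multiplicity `⌊t/e⌋ - ⌊t/2e⌋`. For `t = ⌊m/2^(j+1)⌋` these multiplicities telescope
in `j` to at most `⌊m/2e⌋`, which is at most the multiplicity of `Φ_(2e)` in `S_a S_b` as soon as
`m ≤ a + b + 1`; so `D_n` divides every summand of `T_n`. At `z = 1` we have `S_t(1) = 2^t`, so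
`T_n(1) = n 2^(n-3)`, and by Legendre's formula `D_n(1) = 2^(v₂((n-2)!)) = 2^(n-2-ν(n-2))`.
-/

open Finset

lemma one_add_X_pow_eq_prod_cyclotomic {k : ℕ} (hk : 0 < k) :
    (1 + X ^ k : ℤ[X]) = ∏ d ∈ (2 * k).divisors with ¬ d ∣ k, cyclotomic d ℤ := by
  have hsplit : (2 * k).divisors.filter (· ∣ k) = k.divisors := by
    ext d
    simp only [mem_filter, Nat.mem_divisors]
    exact ⟨fun h => ⟨h.2, hk.ne'⟩, fun h => ⟨⟨h.1.mul_left 2, by omega⟩, h.1⟩⟩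
  apply mul_left_cancel₀ (X_pow_sub_C_ne_zero hk (1 : ℤ))
  rw [C_1, show (X ^ k - 1) * (1 + X ^ k) = (X ^ (2 * k) - 1 : ℤ[X]) by ring,
    ← prod_cyclotomic_eq_X_pow_sub_one (by omega), ← prod_filter_mul_prod_filter_not _ (· ∣ k),
    hsplit, prod_cyclotomic_eq_X_pow_sub_one hk]

def cyclotomicExp (t d : ℕ) : ℕ := #{k ∈ Icc 1 t | d ∣ 2 * k ∧ ¬ d ∣ k}

lemma S_eq_prod_cyclotomic_s19 {t N : ℕ} (hN : 2 * t < N) :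
    S t = ∏ d ∈ range N, cyclotomic d ℤ ^ cyclotomicExp t d := by
  rw [S, prod_congr rfl fun k hk => one_add_X_pow_eq_prod_cyclotomic (mem_Icc.1 hk).1]
  rw [prod_comm' (t' := range N) (s' := fun d => {k ∈ Icc 1 t | d ∣ 2 * k ∧ ¬ d ∣ k})]
  · simp only [prod_const, cyclotomicExp]
  · intro k d
    simp only [mem_Icc, mem_filter, Nat.mem_divisors, mem_range]
    constructor
    · rintro ⟨hk, ⟨hd, -⟩, hdk⟩
      exact ⟨⟨hk, hd, hdk⟩, by have := Nat.le_of_dvd (by omega) hd; omega⟩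
    · rintro ⟨⟨hk, hd, hdk⟩, -⟩
      exact ⟨hk, ⟨hd, by omega⟩, hdk⟩

lemma cyclotomicExp_of_odd {d : ℕ} (hd : Odd d) (t : ℕ) : cyclotomicExp t d = 0 := by
  rw [cyclotomicExp, card_eq_zero, filter_eq_empty_iff]
  rintro k - ⟨h2k, hk⟩
  exact hk ((Nat.coprime_two_right.2 hd).dvd_of_dvd_mul_left h2k)

lemma cyclotomicExp_two_mul (t e : ℕ) : cyclotomicExp t (2 * e) = t / e - t / (2 * e) := by
  have hIcc : Icc 1 t = Ioc 0 t := by ext; simp [Nat.one_le_iff_ne_zero, Nat.pos_iff_ne_zero]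
  simp_rw [cyclotomicExp, Nat.mul_dvd_mul_iff_left two_pos, hIcc, filter_and_not]
  rw [card_sdiff_of_subset, Nat.Ioc_filter_dvd_card_eq_div, Nat.Ioc_filter_dvd_card_eq_div]
  exact monotone_filter_right _ fun _ _ => dvd_of_mul_left_dvd

lemma div_two_mul_add_le {m a b : ℕ} (h : m ≤ a + b + 1) (e : ℕ) :
    m / (2 * e) + a / (2 * e) + b / (2 * e) ≤ a / e + b / e := by
  rcases Nat.eq_zero_or_pos e with rfl | he
  · simp
  have hm : m / e ≤ a / e + b / e + 1 := by
    refine Nat.le_of_lt_succ ((Nat.div_lt_iff_lt_mul he).2 ?_)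
    have ha := Nat.lt_mul_div_succ a he
    have hb := Nat.lt_mul_div_succ b he
    nlinarith
  simp only [mul_comm 2 e, ← Nat.div_div_eq_div_mul]
  omega

lemma Antitone.sum_range_tsub_add {f : ℕ → ℕ} (hf : Antitone f) (J : ℕ) :
    ∑ j ∈ range J, (f j - f (j + 1)) + f J = f 0 := by
  induction J with
  | zero => simp
  | succ J ih =>
    have : f (J + 1) ≤ f J := hf J.le_succ
    rw [sum_range_succ]
    omega

lemma sum_cyclotomicExp_le {m a b : ℕ} (h : m ≤ a + b + 1) (J d : ℕ) :
    ∑ j ∈ range J, cyclotomicExp (m / 2 ^ (j + 1)) d ≤ cyclotomicExp a d + cyclotomicExp b d := by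
  rcases Nat.even_or_odd d with ⟨e, rfl⟩ | hd
  swap
  · simp [cyclotomicExp_of_odd hd]
  set f : ℕ → ℕ := fun j => m / 2 ^ (j + 1) / e
  have hf : Antitone f := fun i j hij => Nat.div_le_div_right
    (Nat.div_le_div_left (Nat.pow_le_pow_right two_pos (by omega)) (by positivity))
  have hterm : ∀ j, cyclotomicExp (m / 2 ^ (j + 1)) (e + e) = f j - f (j + 1) := fun j => by
    simp only [f, ← two_mul, cyclotomicExp_two_mul, Nat.div_div_eq_div_mul, pow_succ, mul_assoc]
  have hf0 : f 0 = m / (2 * e) := by simp [f, Nat.div_div_eq_div_mul]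
  rw [sum_congr rfl fun j _ => hterm j, ← two_mul, cyclotomicExp_two_mul, cyclotomicExp_two_mul]
  have htele := hf.sum_range_tsub_add J
  have hfloor := div_two_mul_add_le h e
  have ha := Nat.div_le_div_left (Nat.le_mul_of_pos_left e two_pos) (a := a)
  have hb := Nat.div_le_div_left (Nat.le_mul_of_pos_left e two_pos) (a := b)
  omega

lemma prod_S_div_two_pow_dvd {m a b : ℕ} (h : m ≤ a + b + 1) (J : ℕ) :
    ∏ j ∈ range J, S (m / 2 ^ (j + 1)) ∣ S a * S b := by
  have hS : ∀ t ≤ m + a + b,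
      S t = ∏ d ∈ range (2 * (m + a + b) + 1), cyclotomic d ℤ ^ cyclotomicExp t d :=
    fun t ht => S_eq_prod_cyclotomic_s19 (by omega)
  rw [hS a (by omega), hS b (by omega), ← prod_mul_distrib,
    prod_congr rfl fun j _ => hS (m / 2 ^ (j + 1)) ((Nat.div_le_self _ _).trans (by omega)),
    prod_comm]
  simp_rw [prod_pow_eq_pow_sum, ← pow_add]
  exact prod_dvd_prod_of_dvd _ _ fun d _ => pow_dvd_pow _ (sum_cyclotomicExp_le h J d)

lemma D_eq_prod (n : ℕ) : D n = ∏ j ∈ range (Nat.log 2 (n - 2)), S ((n - 2) / 2 ^ (j + 1)) := by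
  refine finprod_eq_prod_of_mulSupport_subset _ fun j hj => ?_
  by_contra hlog
  simp only [coe_range, Set.mem_Iio, not_lt] at hlog
  refine hj ?_
  show S _ = 1
  rw [Nat.div_eq_of_lt ?_]
  · simp [S]
  exact (Nat.lt_pow_succ_log_self one_lt_two _).trans_le (Nat.pow_le_pow_right two_pos (by omega))

lemma D_dvd_S_mul_S {n a b : ℕ} (h : n - 2 ≤ a + b + 1) : D n ∣ S a * S b :=
  D_eq_prod n ▸ prod_S_div_two_pow_dvd h _

lemma D_dvd_T (n : ℕ) : D n ∣ T n := by
  refine dvd_add (dvd_mul_of_dvd_right (dvd_sum fun i hi => ?_) _) (sq (S _) ▸ D_dvd_S_mul_S ?_)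
  · exact dvd_mul_of_dvd_left (D_dvd_S_mul_S (by simp only [mem_Icc] at hi; omega)) _
  · omega

lemma S_eval_one (t : ℕ) : (S t).eval 1 = 2 ^ t := by
  simp [S, eval_prod, one_add_one_eq_two]

lemma D_eval_one (n : ℕ) : (D n).eval 1 = 2 ^ padicValNat 2 (n - 2).factorial := by
  rw [D_eq_prod, eval_prod, prod_congr rfl fun j _ => S_eval_one _, prod_pow_eq_pow_sum,
    padicValNat_factorial (lt_add_one _), range_eq_Ico, ← sum_Ico_add' _ 0 _ 1]

lemma T_eval_one {n : ℕ} (hn : 3 ≤ n) : (T n).eval 1 = n * 2 ^ (n - 3) := by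
  have hterm : ∀ i ∈ Icc 1 ((n - 1) / 2), (2 : ℤ) ^ (n - i - 2) * 2 ^ (i - 1) = 2 ^ (n - 3) :=
    fun i hi => by rw [← pow_add]; simp only [mem_Icc] at hi; congr 1; omega
  simp only [T, eval_add, eval_mul, eval_pow, eval_ofNat, eval_finsetSum, eval_X, one_pow,
    mul_one, S_eval_one]
  rw [sum_congr rfl hterm, sum_const, Nat.card_Icc, nsmul_eq_mul]
  obtain ⟨k, rfl | rfl⟩ : ∃ k, n = 2 * k + 3 ∨ n = 2 * k + 4 := ⟨(n - 3) / 2, by omega⟩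
  · rw [show (2 * k + 3 - 1) / 2 + 1 - 1 = k + 1 by omega, show 2 * k + 3 - 3 = 2 * k by omega,
      show (2 * k + 3 - 2) / 2 = k by omega]
    push_cast; ring
  · rw [show (2 * k + 4 - 1) / 2 + 1 - 1 = k + 1 by omega,
      show 2 * k + 4 - 3 = 2 * k + 1 by omega, show (2 * k + 4 - 2) / 2 = k + 1 by omega]
    push_cast; ring

theorem P_eval_one (n : ℕ) (hn : 3 ≤ n) :
    ∃ P : Polynomial ℤ, T n = D n * P ∧
      P.eval 1 = n * 2 ^ ((Nat.digits 2 (n - 2)).sum - 1) := by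
  obtain ⟨P, hP⟩ := D_dvd_T n
  refine ⟨P, hP, mul_left_cancel₀ (pow_ne_zero (padicValNat 2 (n - 2).factorial) two_ne_zero) ?_⟩
  have hlegendre := sub_one_mul_padicValNat_factorial (p := 2) (n - 2)
  have hlt := padicValNat_factorial_lt_of_ne_zero 2 (n := n - 2) (by omega)
  have hdigits := Nat.digit_sum_le 2 (n - 2)
  rw [← D_eval_one, ← eval_mul, ← hP, T_eval_one hn, mul_left_comm, D_eval_one, ← pow_add]
  congr 2
  omega
end
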